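/- arXiv:1805.08512 — 2 statements merged into one kernel-verified Lean document; each statement's English description precedes it below -/
import Mathlib

section
/- Let (X_{i,j})_{i,j ≥ 1} be a double array of square-integrable real random variables with sup_{i,j} E[X_{i,j}²] < ∞. Suppose there exists a constant C such that E[(X_{i₁,i₂} − C)(X_{i₃,i₄} − C)] → 0 as min over distinct pairs k ≠ l in {1,2,3,4} of |i_k − i_l| tends to infinity. Then (1/n²)·Σ_{i₁,i₂=1}^{n} X_{i₁,i₂} converges to C in probability as n → ∞. -/
/-!
Second-moment method. With `Y i j = X i j - C`, the mean square error `E[(S_n - C)²]` equals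
`n⁻⁴` times the sum of `E[Y i₁ i₂ * Y i₃ i₄]` over all quadruples in `[1, n]⁴`. Given `ε`, choose
`N` so that these covariances are at most `ε` on `N`-separated quadruples; the remaining
quadruples, at most `32 N n³` of them, contribute at most `K` each, where `K` bounds every
`E[Y i j ²]`. Hence the mean square error is at most `ε + 32 K N / n`, so it tends to `0`, and
convergence in `L²` implies convergence in probability.
-/

open MeasureTheory Filter Finset
open scoped Topology

def IsSeparated {m : ℕ} (N : ℕ) (v : Fin m → ℕ) : Prop :=
  Pairwise fun k l => N ≤ Nat.dist (v k) (v l)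

instance {m : ℕ} (N : ℕ) : DecidablePred (IsSeparated (m := m) N) := fun v =>
  inferInstanceAs (Decidable (∀ k l : Fin m, k ≠ l → N ≤ Nat.dist (v k) (v l)))

theorem Nat.card_filter_dist_lt_le (s : Finset ℕ) (a N : ℕ) :
    #{b ∈ s | Nat.dist a b < N} ≤ 2 * N := by
  calc #{b ∈ s | Nat.dist a b < N} ≤ #(Ico (a + 1 - N) (a + N)) := by
        refine card_le_card fun b hb => ?_
        rw [mem_filter, Nat.dist] at hb
        rw [mem_Ico]
        omega
    _ ≤ 2 * N := by rw [Nat.card_Ico]; omega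

theorem card_filter_dist_apply_lt_le {m : ℕ} (t : Finset ℕ) {k l : Fin m} (hkl : k ≠ l) (N : ℕ) :
    #{v ∈ Fintype.piFinset fun _ : Fin m => t | Nat.dist (v k) (v l) < N}
      ≤ 2 * N * #t ^ (m - 1) := by
  set S := {v ∈ Fintype.piFinset fun _ : Fin m => t | Nat.dist (v k) (v l) < N}
  -- Forgetting the coordinate `l` is at most `2N`-to-one on `S`, since `v l` is `N`-close to `v k`.
  have hfiber : ∀ w ∈ S.image (Function.update · l 0),
      #{v ∈ S | Function.update v l 0 = w} ≤ 2 * N := by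
    intro w _
    refine (card_le_card_of_injOn (· l) (t := {b ∈ t | Nat.dist (w k) b < N}) ?_ ?_).trans
      (Nat.card_filter_dist_lt_le t (w k) N)
    · intro v hv
      simp only [coe_filter, Set.mem_ofPred_eq, S, mem_filter, Fintype.mem_piFinset] at hv ⊢
      obtain ⟨⟨hvt, hvN⟩, rfl⟩ := hv
      rw [Function.update_of_ne hkl]
      exact ⟨hvt l, hvN⟩
    · intro v hv v' hv' hvv'
      simp only [coe_filter, Set.mem_ofPred_eq] at hv hv'
      rw [← Function.update_eq_self l v, ← Function.update_eq_self l v', ← Function.update_idem,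
        hv.2, ← hv'.2, Function.update_idem]
      exact congrArg _ hvv'
  have himage : S.image (Function.update · l 0) ⊆
      Fintype.piFinset (Function.update (fun _ : Fin m => t) l {0}) := by
    intro w hw
    simp only [mem_image, S, mem_filter, Fintype.mem_piFinset] at hw
    obtain ⟨v, ⟨hvt, -⟩, rfl⟩ := hw
    rw [Fintype.mem_piFinset]
    intro i
    rcases eq_or_ne i l with rfl | hil
    · simp
    · simp [Function.update_of_ne hil, hvt i]
  have hcard : ∀ i, #(Function.update (fun _ : Fin m => t) l {0} i)
      = Function.update (fun _ => #t) l 1 i :=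
    fun i => Function.apply_update (fun _ s => #s) _ l {0} i
  calc #S ≤ 2 * N * #(S.image (Function.update · l 0)) := card_le_mul_card_image S _ hfiber
    _ ≤ 2 * N * #t ^ (m - 1) := by
      gcongr
      refine (card_le_card himage).trans_eq ?_
      simp [Fintype.card_piFinset, hcard, prod_update_of_mem (mem_univ l), card_sdiff]

theorem card_filter_not_isSeparated_le {m : ℕ} (t : Finset ℕ) (N : ℕ) :
    #{v ∈ Fintype.piFinset fun _ : Fin m => t | ¬ IsSeparated N v}
      ≤ m ^ 2 * (2 * N * #t ^ (m - 1)) := by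
  calc _ ≤ #((univ : Finset (Fin m)).offDiag.biUnion fun kl =>
        {v ∈ Fintype.piFinset fun _ => t | Nat.dist (v kl.1) (v kl.2) < N}) := by
        refine card_le_card fun v hv => ?_
        simp only [mem_filter, IsSeparated, Pairwise, not_forall, not_le] at hv
        obtain ⟨hvt, k, l, hkl, hlt⟩ := hv
        simp only [mem_biUnion, mem_offDiag, mem_univ, true_and, mem_filter]
        exact ⟨(k, l), hkl, hvt, hlt⟩
    _ ≤ ∑ kl ∈ (univ : Finset (Fin m)).offDiag, 2 * N * #t ^ (m - 1) :=
        card_biUnion_le.trans (sum_le_sum fun kl hkl =>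
          card_filter_dist_apply_lt_le t (mem_offDiag.1 hkl).2.2 N)
    _ ≤ m ^ 2 * (2 * N * #t ^ (m - 1)) := by
        rw [sum_const, smul_eq_mul]
        gcongr
        simp [sq]

theorem Finset.sum_le_of_abs_le_of_abs_le {α : Type*} (s : Finset α) (p : α → Prop)
    [DecidablePred p] (f : α → ℝ) {ε K : ℝ} (hε : 0 ≤ ε) (hgood : ∀ a ∈ s, p a → |f a| ≤ ε)
    (hall : ∀ a ∈ s, |f a| ≤ K) :
    ∑ a ∈ s, f a ≤ ε * #s + K * #{a ∈ s | ¬ p a} := by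
  calc ∑ a ∈ s, f a ≤ ∑ a ∈ s, |f a| := sum_le_sum fun a _ => le_abs_self _
    _ = ∑ a ∈ s with p a, |f a| + ∑ a ∈ s with ¬ p a, |f a| :=
        (sum_filter_add_sum_filter_not _ _ _).symm
    _ ≤ #{a ∈ s | p a} • ε + #{a ∈ s | ¬ p a} • K := by
        gcongr
        · exact sum_le_card_nsmul _ _ _ fun a ha => hgood a (mem_filter.1 ha).1 (mem_filter.1 ha).2
        · exact sum_le_card_nsmul _ _ _ fun a ha => hall a (mem_filter.1 ha).1
    _ ≤ ε * #s + K * #{a ∈ s | ¬ p a} := by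
        rw [nsmul_eq_mul, nsmul_eq_mul, mul_comm, mul_comm (#_ : ℝ) K]
        gcongr
        exact filter_subset _ _

theorem average_sub_const_eq {n : ℕ} (hn : n ≠ 0) (x : ℕ → ℕ → ℝ) (c : ℝ) :
    1 / (n : ℝ) ^ 2 * ∑ i ∈ Icc 1 n, ∑ j ∈ Icc 1 n, x i j - c
      = 1 / (n : ℝ) ^ 2 * ∑ p ∈ Icc 1 n ×ˢ Icc 1 n, (x p.1 p.2 - c) := by
  rw [sum_sub_distrib, sum_product, sum_const, card_product, Nat.card_Icc, Nat.add_sub_cancel,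
    nsmul_eq_mul]
  field_simp
  push_cast
  ring

section

variable {Ω : Type*} [MeasurableSpace Ω] {μ : Measure Ω}

theorem integral_sq_finset_sum {ι : Type*} (s : Finset ι) {f : ι → Ω → ℝ}
    (hf : ∀ i ∈ s, MemLp (f i) 2 μ) :
    ∫ ω, (∑ i ∈ s, f i ω) ^ 2 ∂μ = ∑ i ∈ s, ∑ j ∈ s, ∫ ω, f i ω * f j ω ∂μ := by
  have hmul : ∀ i ∈ s, ∀ j ∈ s, Integrable (fun ω => f i ω * f j ω) μ :=
    fun i hi j hj => (hf i hi).integrable_mul (hf j hj)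
  simp_rw [sq, sum_mul_sum]
  rw [integral_finsetSum _ fun i hi => integrable_finsetSum _ (hmul i hi)]
  exact sum_congr rfl fun i hi => integral_finsetSum _ (hmul i hi)

theorem abs_integral_mul_le {f g : Ω → ℝ} (hf : MemLp f 2 μ) (hg : MemLp g 2 μ) {K : ℝ}
    (hfK : ∫ ω, f ω ^ 2 ∂μ ≤ K) (hgK : ∫ ω, g ω ^ 2 ∂μ ≤ K) :
    |∫ ω, f ω * g ω ∂μ| ≤ K := by
  have hsq := hf.integrable_sq.add hg.integrable_sq
  calc |∫ ω, f ω * g ω ∂μ| ≤ ∫ ω, |f ω * g ω| ∂μ := abs_integral_le_integral_abs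
    _ ≤ ∫ ω, (f ω ^ 2 + g ω ^ 2) / 2 ∂μ := by
        refine integral_mono (hf.integrable_mul hg).abs (hsq.div_const 2) fun ω => ?_
        rw [abs_mul]
        nlinarith [sq_abs (f ω), sq_abs (g ω), sq_nonneg (|f ω| - |g ω|)]
    _ = (∫ ω, f ω ^ 2 ∂μ + ∫ ω, g ω ^ 2 ∂μ) / 2 := by
        rw [integral_div, integral_add hf.integrable_sq hg.integrable_sq]
    _ ≤ K := by linarith

theorem integral_sub_const_sq_le [IsProbabilityMeasure μ] {f : Ω → ℝ} (hf : MemLp f 2 μ)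
    (c : ℝ) : ∫ ω, (f ω - c) ^ 2 ∂μ ≤ 2 * ∫ ω, f ω ^ 2 ∂μ + 2 * c ^ 2 := by
  calc ∫ ω, (f ω - c) ^ 2 ∂μ ≤ ∫ ω, 2 * f ω ^ 2 + 2 * c ^ 2 ∂μ := by
        refine integral_mono (hf.sub (memLp_const c)).integrable_sq
          ((hf.integrable_sq.const_mul 2).add (integrable_const _)) fun ω => ?_
        nlinarith [sq_nonneg (f ω + c)]
    _ = 2 * ∫ ω, f ω ^ 2 ∂μ + 2 * c ^ 2 := by
        rw [integral_add (hf.integrable_sq.const_mul 2) (integrable_const _), integral_const_mul]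
        simp

theorem tendstoInMeasure_of_tendsto_integral_sq {ι : Type*} {l : Filter ι} {f : ι → Ω → ℝ}
    {g : Ω → ℝ} (hf : ∀ i, MemLp (f i) 2 μ) (hg : MemLp g 2 μ)
    (h : Tendsto (fun i => ∫ ω, (f i ω - g ω) ^ 2 ∂μ) l (𝓝 0)) : TendstoInMeasure μ f l g := by
  refine tendstoInMeasure_of_tendsto_eLpNorm two_ne_zero (fun i => (hf i).1) hg.1 ?_
  have hnorm : ∀ i, eLpNorm (f i - g) 2 μ
      = ENNReal.ofReal ((∫ ω, (f i ω - g ω) ^ 2 ∂μ) ^ (2⁻¹ : ℝ)) := by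
    intro i
    rw [((hf i).sub hg).eLpNorm_eq_integral_rpow_norm two_ne_zero ENNReal.ofNat_ne_top]
    simp [sq_abs]
  simp_rw [hnorm]
  simpa using ENNReal.tendsto_ofReal (h.rpow_const (Or.inr (by norm_num : (0 : ℝ) ≤ 2⁻¹)))

theorem integral_sq_sum_le_of_abs_integral_mul_le (Y : ℕ → ℕ → Ω → ℝ)
    (hY : ∀ i j, MemLp (Y i j) 2 μ) {K : ℝ} (hK : ∀ i j, ∫ ω, Y i j ω ^ 2 ∂μ ≤ K) {ε : ℝ}
    (hε : 0 ≤ ε) {N : ℕ} (hN : ∀ i₁ i₂ i₃ i₄ : ℕ, IsSeparated N ![i₁, i₂, i₃, i₄] →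
      |∫ ω, Y i₁ i₂ ω * Y i₃ i₄ ω ∂μ| ≤ ε)
    (t : Finset ℕ) :
    ∫ ω, (∑ p ∈ t ×ˢ t, Y p.1 p.2 ω) ^ 2 ∂μ ≤ ε * #t ^ 4 + K * (32 * N * #t ^ 3) := by
  have hK0 : 0 ≤ K := (integral_nonneg fun ω => sq_nonneg _).trans (hK 0 0)
  let quad : (ℕ × ℕ) × ℕ × ℕ → Fin 4 → ℕ := fun z => ![z.1.1, z.1.2, z.2.1, z.2.2]
  have hbad : #{z ∈ (t ×ˢ t) ×ˢ (t ×ˢ t) | ¬ IsSeparated N (quad z)} ≤ 32 * N * #t ^ 3 := by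
    refine (card_le_card_of_injOn quad ?_ ?_).trans
      ((card_filter_not_isSeparated_le t N).trans_eq (by ring))
    · intro z hz
      simp only [coe_filter, Set.mem_ofPred_eq, mem_product] at hz
      simp only [coe_filter, Set.mem_ofPred_eq, Fintype.mem_piFinset]
      refine ⟨fun i => ?_, hz.2⟩
      fin_cases i <;> simp [quad, hz.1]
    · intro z _ z' _ h
      have := congrFun h
      ext <;> [exact this 0; exact this 1; exact this 2; exact this 3]
  rw [integral_sq_finset_sum _ fun p _ => hY _ _, ← sum_product']
  refine (sum_le_of_abs_le_of_abs_le _ _ _ hε (fun z _ hz => hN _ _ _ _ hz)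
    fun z _ => abs_integral_mul_le (hY _ _) (hY _ _) (hK _ _) (hK _ _)).trans ?_
  gcongr
  · simp only [card_product]; push_cast; exact le_of_eq (by ring)
  · exact_mod_cast hbad

theorem integral_sq_average_le (Y : ℕ → ℕ → Ω → ℝ)
    (hY : ∀ i j, MemLp (Y i j) 2 μ) {K : ℝ} (hK : ∀ i j, ∫ ω, Y i j ω ^ 2 ∂μ ≤ K) {ε : ℝ}
    (hε : 0 ≤ ε) {N : ℕ} (hN : ∀ i₁ i₂ i₃ i₄ : ℕ, IsSeparated N ![i₁, i₂, i₃, i₄] →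
      |∫ ω, Y i₁ i₂ ω * Y i₃ i₄ ω ∂μ| ≤ ε)
    {n : ℕ} (hn : n ≠ 0) :
    ∫ ω, (1 / (n : ℝ) ^ 2 * ∑ p ∈ Icc 1 n ×ˢ Icc 1 n, Y p.1 p.2 ω) ^ 2 ∂μ
      ≤ ε + 32 * K * N / n := by
  have hbound := integral_sq_sum_le_of_abs_integral_mul_le Y hY hK hε hN (Icc 1 n)
  rw [Nat.card_Icc, Nat.add_sub_cancel] at hbound
  simp_rw [mul_pow]
  rw [integral_const_mul]
  calc (1 / (n : ℝ) ^ 2) ^ 2 * ∫ ω, (∑ p ∈ Icc 1 n ×ˢ Icc 1 n, Y p.1 p.2 ω) ^ 2 ∂μ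
      ≤ (1 / (n : ℝ) ^ 2) ^ 2 * (ε * n ^ 4 + K * (32 * N * n ^ 3)) := by gcongr
    _ = ε + 32 * K * N / n := by field_simp

end

theorem stmt_4 {Ω : Type*} [MeasurableSpace Ω] (μ : Measure Ω) [IsProbabilityMeasure μ]
    (X : ℕ → ℕ → Ω → ℝ) (C : ℝ)
    (hL2 : ∀ i j, MemLp (X i j) 2 μ)
    (hbdd : ∃ M : ℝ, ∀ i j, ∫ ω, (X i j ω) ^ 2 ∂μ ≤ M)
    (hcov : ∀ ε > (0 : ℝ), ∃ N : ℕ, ∀ i₁ i₂ i₃ i₄ : ℕ,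
      (∀ k l : Fin 4, k ≠ l →
        N ≤ Nat.dist (![i₁, i₂, i₃, i₄] k) (![i₁, i₂, i₃, i₄] l)) →
      |∫ ω, (X i₁ i₂ ω - C) * (X i₃ i₄ ω - C) ∂μ| < ε) :
    TendstoInMeasure μ
      (fun (n : ℕ) (ω : Ω) => (1 / (n : ℝ) ^ 2) * ∑ i₁ ∈ Finset.Icc 1 n, ∑ i₂ ∈ Finset.Icc 1 n, X i₁ i₂ ω)
      atTop (fun _ => C) := by
  obtain ⟨M, hM⟩ := hbdd
  set K := 2 * M + 2 * C ^ 2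
  have hY : ∀ i j, MemLp (fun ω => X i j ω - C) 2 μ := fun i j => (hL2 i j).sub (memLp_const C)
  have hYK : ∀ i j, ∫ ω, (X i j ω - C) ^ 2 ∂μ ≤ K := fun i j =>
    (integral_sub_const_sq_le (hL2 i j) C).trans (by linarith [hM i j])
  have hmean : ∀ n : ℕ,
      MemLp (fun ω => 1 / (n : ℝ) ^ 2 * ∑ i₁ ∈ Icc 1 n, ∑ i₂ ∈ Icc 1 n, X i₁ i₂ ω) 2 μ :=
    fun n => (memLp_finsetSum _ fun i _ => memLp_finsetSum _ fun j _ => hL2 i j).const_mul _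
  refine tendstoInMeasure_of_tendsto_integral_sq hmean (memLp_const C) (tendsto_order.2
    ⟨fun a ha => .of_forall fun n => ha.trans_le (integral_nonneg fun ω => sq_nonneg _),
      fun a ha => ?_⟩)
  obtain ⟨N, hN⟩ := hcov (a / 2) (half_pos ha)
  have hlim : Tendsto (fun n : ℕ => a / 2 + 32 * K * N / n) atTop (𝓝 (a / 2)) := by
    simpa using (tendsto_const_nhds (x := a / 2)).add
      (tendsto_const_div_atTop_nhds_zero_nat (32 * K * N))
  filter_upwards [eventually_ne_atTop 0, hlim.eventually (gt_mem_nhds (half_lt_self ha))]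
    with n hn hlt
  simp_rw [average_sub_const_eq hn]
  exact (integral_sq_average_le _ hY hYK (half_pos ha).le
    (fun i₁ i₂ i₃ i₄ h => (hN i₁ i₂ i₃ i₄ fun k l hkl => h hkl).le) hn).trans_lt hlt
end

section
/- Define the total dispersion T_α(U₁,...,U_{k+1}) = (T/2)·μ_α(U,U) where U is the pooled sample of all T observations and μ_α(A,B) is the average of |a−b|^α over all ordered pairs (a,b) ∈ A×B, and the within-sample dispersion W_α(U₁,...,U_{k+1}) = Σ_j (n_j/2)·μ_α(U_j,U_j). Then T_α = S_α + W_α, where S_α(U₁,...,U_{k+1}) = Σ_{1 ≤ i < j ≤ k+1} ((n_i+n_j)/(2T))·(n_i·n_j/(n_i+n_j))·(2μ_α(U_i,U_j) − μ_α(U_i,U_i) − μ_α(U_j,U_j)). -/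
open Finset

/-- Average α-distance over all ordered pairs of points from `A × B`. -/
noncomputable def muAlpha {p T : ℕ} (α : ℝ) (u : Fin T → EuclideanSpace ℝ (Fin p))
    (A B : Finset (Fin T)) : ℝ :=
  (1 / ((A.card : ℝ) * (B.card : ℝ))) * ∑ a ∈ A, ∑ b ∈ B, ‖u a - u b‖ ^ α

lemma sum_sum_split {m : ℕ} (h : Fin m → Fin m → ℝ) :
    ∑ i, ∑ j, h i j
      = (∑ i, ∑ j, if i < j then h i j + h j i else 0) + ∑ i, h i i := by
  have e1 : ∀ i j : Fin m, h i j =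
      (if i < j then h i j else 0) + (if j < i then h i j else 0)
        + (if i = j then h i j else 0) := by
    intro i j
    rcases lt_trichotomy i j with hij | hij | hij
    · simp [hij, asymm hij, hij.ne]
    · simp [hij]
    · simp [hij, asymm hij, hij.ne']
  calc ∑ i, ∑ j, h i j
      = ∑ i, ∑ j, ((if i < j then h i j else 0) + (if j < i then h i j else 0)
          + (if i = j then h i j else 0)) := by
        refine Finset.sum_congr rfl fun i _ => Finset.sum_congr rfl fun j _ => e1 i j
    _ = (∑ i, ∑ j, if i < j then h i j else 0) + (∑ i, ∑ j, if j < i then h i j else 0)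
          + ∑ i, ∑ j, if i = j then h i j else 0 := by
        simp [Finset.sum_add_distrib]
    _ = (∑ i, ∑ j, if i < j then h i j else 0) + (∑ i, ∑ j, if i < j then h j i else 0)
          + ∑ i, h i i := by
        congr 1
        · congr 1
          rw [Finset.sum_comm]
        · simp
    _ = (∑ i, ∑ j, if i < j then h i j + h j i else 0) + ∑ i, h i i := by
        congr 1
        rw [← Finset.sum_add_distrib]
        refine Finset.sum_congr rfl fun i _ => ?_
        rw [← Finset.sum_add_distrib]
        refine Finset.sum_congr rfl fun j _ => ?_
        split <;> simp

lemma keyAux (a b t x y z : ℝ) (ha : a ≠ 0) (hb : b ≠ 0) (ht : t ≠ 0) :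
    (a * b / (2 * t)) * (2 * (1 / (a * b) * x) - 1 / (a * a) * y - 1 / (b * b) * z)
      = 1 / (2 * t) * (2 * x - (b / a * y + a / b * z)) := by
  field_simp
  ring

lemma keyAux2 (a x : ℝ) (ha : a ≠ 0) : (a / 2) * (1 / (a * a) * x) = 1 / 2 * (x / a) := by
  field_simp

theorem stmt_11 (p k T : ℕ) (hT : 0 < T) (α : ℝ) (hα0 : 0 < α) (hα2 : α < 2)
    (u : Fin T → EuclideanSpace ℝ (Fin p)) (c : Fin T → Fin (k + 1))
    (S : Fin (k + 1) → Finset (Fin T))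
    (hS : ∀ j, S j = Finset.univ.filter (fun t => c t = j))
    (hne : ∀ j, (S j).Nonempty)
    (n : Fin (k + 1) → ℝ) (hn : ∀ j, n j = ((S j).card : ℝ)) :
    ((T : ℝ) / 2) * muAlpha α u Finset.univ Finset.univ =
      (∑ i, ∑ j, if i < j then
          ((n i + n j) / (2 * (T : ℝ))) * ((n i * n j) / (n i + n j)) *
            (2 * muAlpha α u (S i) (S j)
              - muAlpha α u (S i) (S i) - muAlpha α u (S j) (S j))
        else 0)
      + ∑ j, (n j / 2) * muAlpha α u (S j) (S j) := by
  classical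
  set f : Fin T → Fin T → ℝ := fun a b => ‖u a - u b‖ ^ α with hf
  set E : Fin (k+1) → Fin (k+1) → ℝ := fun i j => ∑ a ∈ S i, ∑ b ∈ S j, f a b with hE
  have hnpos : ∀ j, 0 < n j := fun j => by
    rw [hn]; exact_mod_cast Finset.card_pos.mpr (hne j)
  have hnne : ∀ j, n j ≠ 0 := fun j => (hnpos j).ne'
  have htpos : (0:ℝ) < (T:ℝ) := by exact_mod_cast hT
  have htne : (T:ℝ) ≠ 0 := htpos.ne'
  have hsym : ∀ i j, E i j = E j i := by
    intro i j
    rw [hE]; dsimp only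
    rw [Finset.sum_comm]
    refine Finset.sum_congr rfl fun a _ => Finset.sum_congr rfl fun b _ => ?_
    rw [hf]; dsimp only; rw [norm_sub_rev]
  -- pooled double sum decomposes over fibers
  have hfib : ∀ g : Fin T → ℝ, ∑ a, g a = ∑ i, ∑ a ∈ S i, g a := by
    intro g
    rw [← Finset.sum_fiberwise Finset.univ c g]
    exact Finset.sum_congr rfl fun i _ => by rw [hS i]
  have hpool : ∑ a, ∑ b, f a b = ∑ i, ∑ j, E i j := by
    rw [hfib (fun a => ∑ b, f a b)]
    refine Finset.sum_congr rfl fun i _ => ?_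
    have : ∀ a : Fin T, ∑ b, f a b = ∑ j, ∑ b ∈ S j, f a b := fun a => hfib _
    simp_rw [this]
    rw [Finset.sum_comm]
  have hcardT : (T:ℝ) = ∑ j, n j := by
    have hc : (Finset.univ : Finset (Fin T)).card = ∑ j, (S j).card := by
      rw [Finset.card_eq_sum_card_fiberwise (fun x _ => Finset.mem_univ (c x))]
      exact Finset.sum_congr rfl fun j _ => by rw [hS j]
    calc (T:ℝ) = (((Finset.univ : Finset (Fin T)).card : ℕ) : ℝ) := by simp
      _ = ((∑ j, (S j).card : ℕ) : ℝ) := by rw [hc]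
      _ = ∑ j, n j := by push_cast; exact Finset.sum_congr rfl fun j _ => (hn j).symm
  -- express muAlpha in terms of E and n
  have hmu : ∀ i j, muAlpha α u (S i) (S j) = 1 / (n i * n j) * E i j := by
    intro i j
    rw [muAlpha, hn, hn, hE]
  have hmuU : muAlpha α u Finset.univ Finset.univ = 1 / ((T:ℝ) * T) * ∑ i, ∑ j, E i j := by
    rw [muAlpha, ← hpool]
    simp [hf]
  -- key scalar identity for off-diagonal terms
  have key : ∀ i j : Fin (k+1),
      ((n i + n j) / (2 * (T : ℝ))) * ((n i * n j) / (n i + n j)) *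
        (2 * muAlpha α u (S i) (S j) - muAlpha α u (S i) (S i) - muAlpha α u (S j) (S j))
      = 1 / (2 * (T:ℝ)) *
          (2 * E i j - ((n j / n i) * E i i + (n i / n j) * E j j)) := by
    intro i j
    have hij : n i + n j ≠ 0 := (add_pos (hnpos i) (hnpos j)).ne'
    have e : (n i + n j) / (2 * (T:ℝ)) * (n i * n j / (n i + n j))
        = n i * n j / (2 * (T:ℝ)) := by
      rw [div_mul_div_comm]
      rw [mul_comm (2 * (T:ℝ)) (n i + n j)]
      rw [mul_div_mul_left _ _ hij]
    rw [hmu, hmu, hmu, e]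
    exact keyAux _ _ _ _ _ _ (hnne i) (hnne j) htne
  -- rewrite the between-sample double sum
  have hifsum : (∑ i, ∑ j, if i < j then
        ((n i + n j) / (2 * (T : ℝ))) * ((n i * n j) / (n i + n j)) *
          (2 * muAlpha α u (S i) (S j)
            - muAlpha α u (S i) (S i) - muAlpha α u (S j) (S j)) else 0)
      = 1 / (2 * (T:ℝ)) *
          ((∑ i, ∑ j, if i < j then 2 * E i j else 0)
            - ∑ i, ∑ j, if i < j then (n j / n i) * E i i + (n i / n j) * E j j else 0) := by
    rw [mul_sub, Finset.mul_sum, Finset.mul_sum, ← Finset.sum_sub_distrib]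
    refine Finset.sum_congr rfl fun i _ => ?_
    rw [Finset.mul_sum, Finset.mul_sum, ← Finset.sum_sub_distrib]
    refine Finset.sum_congr rfl fun j _ => ?_
    split
    · rw [key i j]; ring
    · simp
  -- within-sample sum
  have hW : (∑ j, (n j / 2) * muAlpha α u (S j) (S j)) = 1 / 2 * ∑ j, E j j / n j := by
    rw [Finset.mul_sum]
    refine Finset.sum_congr rfl fun j _ => ?_
    rw [hmu]
    exact keyAux2 _ _ (hnne j)
  -- decomposition of total double sum
  have h1 : ∑ i, ∑ j, E i j = (∑ i, ∑ j, if i < j then 2 * E i j else 0) + ∑ i, E i i := by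
    rw [sum_sum_split E]
    congr 1
    refine Finset.sum_congr rfl fun i _ => Finset.sum_congr rfl fun j _ => ?_
    split
    · rw [hsym j i]; ring
    · rfl
  -- cross-term sum
  have h2 : (∑ i, ∑ j, if i < j then (n j / n i) * E i i + (n i / n j) * E j j else 0)
      = (T:ℝ) * (∑ i, E i i / n i) - ∑ i, E i i := by
    have hs := sum_sum_split (fun i j => (n j / n i) * E i i)
    have hl : ∑ i, ∑ j, (n j / n i) * E i i = (T:ℝ) * ∑ i, E i i / n i := by
      rw [Finset.mul_sum]
      refine Finset.sum_congr rfl fun i _ => ?_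
      have : ∀ j, (n j / n i) * E i i = n j * (E i i / n i) := fun j => by ring
      simp_rw [this]
      rw [← Finset.sum_mul, ← hcardT]
    have hd : ∑ i, (n i / n i) * E i i = ∑ i, E i i := by
      refine Finset.sum_congr rfl fun i _ => ?_
      rw [div_self (hnne i), one_mul]
    rw [hl, hd] at hs
    linarith [hs]
  rw [hmuU, hifsum, hW, h1, h2]
  field_simp
  ring
end
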